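/- Let q ≥ 2 and n ≥ 1 be integers, Ψ(λ) = (q+1)√(4q − λ²)/(2((q+1)² − λ²)), and Φ_n the spherical function. Then the function λ ↦ Ψ(λ)Φ_n'(λ) is differentiable on (−2√q, 2√q) and its total variation satisfies ∫_{−2√q}^{2√q} |(Ψ Φ_n')'(λ)| dλ ≤ (n+2) n² q^{−n/2} (2 + (n+1)(q−1)) / (q−1)². -/

import Mathlib

/-!
The function `g = Ψ Φₙ'` vanishes at `±2√q` because of the factor `√(4q − λ²)` in `Ψ`. On
`(−2√q, 2√q)` its derivative is a positive function times a polynomial of degree at most `n + 2`,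
so `g` is monotone between consecutive roots `x₁ < ⋯ < xₖ` (`k ≤ n + 2`) of that polynomial. Its
total variation is then `∑ |g(xᵢ₊₁) − g(xᵢ)| ≤ 2k sup |g|` (the terms at `±2√q` vanish), and
`sup |g| ≤ sup |Ψ| · sup |Φₙ'|`.
-/

open Set Real MeasureTheory intervalIntegral

noncomputable def Psi (q : ℕ) (l : ℝ) : ℝ :=
  ((q:ℝ)+1) * Real.sqrt (4*q - l^2) / (2*(((q:ℝ)+1)^2 - l^2))

/-- The spherical function of the `(q+1)`-regular tree. -/
noncomputable def Phi (q n : ℕ) (l : ℝ) : ℝ :=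
  (q:ℝ) ^ (-(n:ℝ)/2) *
    ((2/((q:ℝ)+1)) * (Polynomial.Chebyshev.T ℝ (n:ℤ)).eval (l/(2*Real.sqrt q))
      + (((q:ℝ)-1)/((q:ℝ)+1)) * (Polynomial.Chebyshev.U ℝ (n:ℤ)).eval (l/(2*Real.sqrt q)))

open Polynomial Polynomial.Chebyshev

section TotalVariation

variable {g : ℝ → ℝ} {a b : ℝ}

theorem intervalIntegrable_abs_deriv_and_integral_le_of_deriv_nonneg (hab : a ≤ b)
    (hc : ContinuousOn g (Icc a b)) (hd : ∀ x ∈ Ioo a b, DifferentiableAt ℝ g x)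
    (hg' : ∀ x ∈ Ioo a b, 0 ≤ deriv g x) :
    IntervalIntegrable (fun x => |deriv g x|) volume a b ∧
      ∫ x in a..b, |deriv g x| ≤ g b - g a := by
  have hint : IntegrableOn (fun x => |deriv g x|) (Ioc a b) :=
    (integrableOn_deriv_of_nonneg hc (fun x hx => (hd x hx).hasDerivAt) hg').abs
  refine ⟨(intervalIntegrable_iff_integrableOn_Ioc_of_le hab).2 hint, ?_⟩
  exact integral_le_sub_of_hasDeriv_right_of_le hab hc
    (fun x hx => (hd x hx).hasDerivAt.hasDerivWithinAt)
    ((integrableOn_Icc_iff_integrableOn_Ioc).2 hint) (fun x hx => (abs_of_nonneg (hg' x hx)).le)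

theorem intervalIntegrable_abs_deriv_and_integral_le_of_no_sign_change (hab : a ≤ b)
    (hc : ContinuousOn g (Icc a b)) (hd : ∀ x ∈ Ioo a b, DifferentiableAt ℝ g x)
    (hg' : ∀ x ∈ Ioo a b, ∀ y ∈ Ioo a b, 0 ≤ deriv g x * deriv g y) :
    IntervalIntegrable (fun x => |deriv g x|) volume a b ∧
      ∫ x in a..b, |deriv g x| ≤ |g b - g a| := by
  by_cases hpos : ∀ x ∈ Ioo a b, 0 ≤ deriv g x
  · obtain ⟨hint, hle⟩ :=
      intervalIntegrable_abs_deriv_and_integral_le_of_deriv_nonneg hab hc hd hpos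
    exact ⟨hint, hle.trans (le_abs_self _)⟩
  push Not at hpos
  obtain ⟨x₀, hx₀, hneg⟩ := hpos
  have hneg' : ∀ x ∈ Ioo a b, 0 ≤ deriv (fun x => -g x) x := fun x hx => by
    rw [deriv.fun_neg]; nlinarith [hg' x₀ hx₀ x hx]
  obtain ⟨hint, hle⟩ := intervalIntegrable_abs_deriv_and_integral_le_of_deriv_nonneg
    (g := fun x => -g x) hab hc.neg (fun x hx => (hd x hx).neg) hneg'
  simp only [deriv.fun_neg, abs_neg] at hint hle
  exact ⟨hint, hle.trans (by rw [abs_sub_comm]; linarith [le_abs_self (g a - g b)])⟩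

theorem intervalIntegrable_abs_deriv_and_integral_le_of_sign_changes_subset {M : ℝ}
    (S : Finset ℝ) (hab : a ≤ b) (hc : ContinuousOn g (Icc a b))
    (hd : ∀ x ∈ Ioo a b, DifferentiableAt ℝ g x) (hM : ∀ x ∈ Icc a b, |g x| ≤ M)
    (hS : ∀ x ∈ Ioo a b, ∀ y ∈ Ioo a b, deriv g x * deriv g y < 0 → ∃ s ∈ S, s ∈ uIcc x y) :
    IntervalIntegrable (fun x => |deriv g x|) volume a b ∧
      ∫ x in a..b, |deriv g x| ≤ |g a| + |g b| + 2 * M * S.card := by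
  induction S using Finset.strongInduction generalizing a with
  | H S ih =>
  have hM0 : 0 ≤ M := (abs_nonneg _).trans (hM a ⟨le_rfl, hab⟩)
  by_cases hT : ∃ s ∈ S, s ∈ Ioo a b
  swap
  · have hsign : ∀ x ∈ Ioo a b, ∀ y ∈ Ioo a b, 0 ≤ deriv g x * deriv g y := by
      intro x hx y hy
      by_contra! h
      obtain ⟨s, hs, hsxy⟩ := hS x hx y hy h
      exact hT ⟨s, hs, ordConnected_Ioo.uIcc_subset hx hy hsxy⟩
    obtain ⟨hint, hle⟩ :=
      intervalIntegrable_abs_deriv_and_integral_le_of_no_sign_change hab hc hd hsign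
    refine ⟨hint, hle.trans ?_⟩
    have := abs_sub (g b) (g a)
    have : 0 ≤ 2 * M * S.card := by positivity
    linarith
  classical
  -- Split at the smallest point `m` of `S` in `(a, b)`: `deriv g` has no sign change on `(a, m)`.
  obtain ⟨m, ⟨hmS, hm⟩, hmin⟩ : ∃ m, (m ∈ S ∧ m ∈ Ioo a b) ∧ ∀ s ∈ S, s ∈ Ioo a b → m ≤ s := by
    have hne : (S.filter (· ∈ Ioo a b)).Nonempty := by simpa [Finset.Nonempty] using hT
    refine ⟨_, Finset.mem_filter.1 ((S.filter (· ∈ Ioo a b)).min'_mem hne), fun s hs hsab => ?_⟩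
    exact Finset.min'_le _ _ (Finset.mem_filter.2 ⟨hs, hsab⟩)
  have hIoo_left : Ioo a m ⊆ Ioo a b := Ioo_subset_Ioo_right hm.2.le
  have hIoo_right : Ioo m b ⊆ Ioo a b := Ioo_subset_Ioo_left hm.1.le
  have hleft : ∀ x ∈ Ioo a m, ∀ y ∈ Ioo a m, 0 ≤ deriv g x * deriv g y := by
    intro x hx y hy
    by_contra! h
    obtain ⟨s, hs, hsxy⟩ := hS x (hIoo_left hx) y (hIoo_left hy) h
    have hs' := ordConnected_Ioo.uIcc_subset hx hy hsxy
    exact (hmin s hs (hIoo_left hs')).not_gt hs'.2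
  obtain ⟨hint₁, hle₁⟩ := intervalIntegrable_abs_deriv_and_integral_le_of_no_sign_change hm.1.le
    (hc.mono (Icc_subset_Icc_right hm.2.le)) (fun x hx => hd x (hIoo_left hx)) hleft
  obtain ⟨hint₂, hle₂⟩ := ih (S.erase m) (Finset.erase_ssubset hmS) hm.2.le
    (hc.mono (Icc_subset_Icc_left hm.1.le)) (fun x hx => hd x (hIoo_right hx))
    (fun x hx => hM x ⟨hm.1.le.trans hx.1, hx.2⟩) (fun x hx y hy h => by
      obtain ⟨s, hs, hsxy⟩ := hS x (hIoo_right hx) y (hIoo_right hy) h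
      have hs' := ordConnected_Ioo.uIcc_subset hx hy hsxy
      exact ⟨s, Finset.mem_erase.2 ⟨hs'.1.ne', hs⟩, hsxy⟩)
  refine ⟨hint₁.trans hint₂, ?_⟩
  rw [← integral_add_adjacent_intervals hint₁ hint₂]
  have hcard : 2 * M * S.card = 2 * M * (S.erase m).card + 2 * M := by
    rw [← Finset.card_erase_add_one hmS]; push_cast; ring
  have := abs_sub (g m) (g a)
  have := hM m (Ioo_subset_Icc_self hm)
  linarith

end TotalVariation

theorem Polynomial.exists_mem_roots_mem_uIcc_of_eval_mul_neg (p : ℝ[X]) {x y : ℝ}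
    (h : p.eval x * p.eval y < 0) : ∃ s ∈ p.roots.toFinset, s ∈ uIcc x y := by
  have h0 : (0 : ℝ) ∈ uIcc (p.eval x) (p.eval y) := by
    rcases mul_neg_iff.1 h with h | h
    · exact mem_uIcc.2 (Or.inr ⟨h.2.le, h.1.le⟩)
    · exact mem_uIcc.2 (Or.inl ⟨h.1.le, h.2.le⟩)
  obtain ⟨s, hs, hs0⟩ := intermediate_value_uIcc p.continuous.continuousOn h0
  have hp : p ≠ 0 := by rintro rfl; simp at h
  exact ⟨s, Multiset.mem_toFinset.2 ((mem_roots hp).2 hs0), hs⟩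

theorem Polynomial.natDegree_mul_iterate_derivative_le {R : Type*} [Semiring R] (f p : R[X])
    (k : ℕ) : (f * derivative^[k] p).natDegree ≤ f.natDegree + p.natDegree - k := by
  rcases lt_or_ge p.natDegree k with hk | hk
  · simp [iterate_derivative_eq_zero hk]
  · have := natDegree_iterate_derivative p k
    exact natDegree_mul_le.trans (by omega)

theorem abs_eval_derivative_T_real_le (n : ℤ) {x : ℝ} (hx : |x| ≤ 1) :
    |(derivative (T ℝ n)).eval x| ≤ n ^ 2 := by
  simpa [derivative_T_eval_one] using abs_iterate_derivative_T_real_le n 1 hx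

theorem abs_eval_derivative_U_real_le (n : ℕ) {x : ℝ} (hx : |x| ≤ 1) :
    3 * |(derivative (U ℝ n)).eval x| ≤ (n + 2) * (n + 1) * n := by
  -- `T'ₙ₊₁ = (n + 1) Uₙ`, so `Uₙ'` inherits the bound `|T''ₙ₊₁(x)| ≤ T''ₙ₊₁(1)`.
  have hT : derivative^[2] (T ℝ (n + 1)) = ((n + 1 : ℤ) : ℝ[X]) * derivative (U ℝ n) := by
    simp [T_derivative_eq_U]
  have h := abs_iterate_derivative_T_real_le (n + 1) 2 hx
  simp only [hT, eval_mul, eval_intCast, abs_mul] at h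
  push_cast at h
  rw [abs_of_pos (by positivity)] at h
  have h1 := derivative_U_eval_one (R := ℝ) n
  push_cast at h1
  nlinarith [le_of_mul_le_mul_left h (by positivity : (0:ℝ) < n + 1)]

noncomputable def sphericalPoly (q n : ℕ) : ℝ[X] :=
  C ((q : ℝ) ^ (-(n : ℝ) / 2)) *
    (C (2 / ((q : ℝ) + 1)) * (T ℝ n).comp (C (2 * √q)⁻¹ * X)
      + C (((q : ℝ) - 1) / ((q : ℝ) + 1)) * (U ℝ n).comp (C (2 * √q)⁻¹ * X))

theorem eval_sphericalPoly (q n : ℕ) (l : ℝ) : (sphericalPoly q n).eval l = Phi q n l := by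
  simp [sphericalPoly, Phi, div_eq_inv_mul]

theorem deriv_Phi (q n : ℕ) :
    deriv (Phi q n) = fun l => (derivative (sphericalPoly q n)).eval l := by
  ext l
  rw [← funext (eval_sphericalPoly q n)]
  exact Polynomial.deriv _

theorem natDegree_sphericalPoly_le (q n : ℕ) : (sphericalPoly q n).natDegree ≤ n := by
  have hlin : (C (2 * √q)⁻¹ * X : ℝ[X]).natDegree ≤ 1 :=
    (natDegree_C_mul_le _ _).trans natDegree_X_le
  have hT : ((T ℝ n).comp (C (2 * √q)⁻¹ * X)).natDegree ≤ n :=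
    natDegree_comp_le.trans (by simpa [natDegree_T] using Nat.mul_le_mul_left n hlin)
  have hU : ((U ℝ n).comp (C (2 * √q)⁻¹ * X)).natDegree ≤ n :=
    natDegree_comp_le.trans (by simpa [natDegree_U_natCast] using Nat.mul_le_mul_left n hlin)
  refine (natDegree_C_mul_le _ _).trans (natDegree_add_le_of_degree_le ?_ ?_)
  · exact (natDegree_C_mul_le _ _).trans hT
  · exact (natDegree_C_mul_le _ _).trans hU

theorem deriv_Phi_eq (q n : ℕ) (l : ℝ) :
    deriv (Phi q n) l = (q : ℝ) ^ (-(n : ℝ) / 2) * (2 * √q)⁻¹ *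
      (2 / ((q : ℝ) + 1) * (derivative (T ℝ n)).eval ((2 * √q)⁻¹ * l)
        + ((q : ℝ) - 1) / ((q : ℝ) + 1) * (derivative (U ℝ n)).eval ((2 * √q)⁻¹ * l)) := by
  simp only [deriv_Phi, sphericalPoly, derivative_mul, derivative_add, derivative_comp,
    derivative_C, derivative_X, eval_mul, eval_add, eval_C, eval_comp, eval_X, eval_zero, eval_one]
  ring

theorem abs_deriv_Phi_le {q : ℕ} (hq : 1 ≤ q) (n : ℕ) {l : ℝ} (hl : |l| ≤ 2 * √q) :
    |deriv (Phi q n) l| ≤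
      (n : ℝ) ^ 2 * (q : ℝ) ^ (-(n : ℝ) / 2) * (2 + ((n : ℝ) + 1) * ((q : ℝ) - 1))
        / (2 * √q * ((q : ℝ) + 1)) := by
  have hqR : (1 : ℝ) ≤ q := mod_cast hq
  have hsq : 0 < √(q : ℝ) := sqrt_pos.2 (by linarith)
  set y := (2 * √q)⁻¹ * l with hy
  have hy1 : |y| ≤ 1 := by
    rw [hy, abs_mul, abs_of_pos (by positivity)]
    calc (2 * √q)⁻¹ * |l| ≤ (2 * √q)⁻¹ * (2 * √q) := by gcongr
      _ = 1 := inv_mul_cancel₀ (by positivity)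
  have hT : |(derivative (T ℝ n)).eval y| ≤ (n : ℝ) ^ 2 :=
    mod_cast abs_eval_derivative_T_real_le n hy1
  have hU : |(derivative (U ℝ n)).eval y| ≤ (n : ℝ) ^ 2 * (n + 1) := by
    have hcubic : ((n : ℝ) + 2) * (n + 1) * n ≤ 3 * ((n : ℝ) ^ 2 * (n + 1)) := by
      rcases n.eq_zero_or_pos with rfl | hn
      · simp
      · have : (1 : ℝ) ≤ n := mod_cast hn
        nlinarith
    linarith [abs_eval_derivative_U_real_le n hy1]
  have hα : 0 ≤ 2 / ((q : ℝ) + 1) := by positivity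
  have hβ : 0 ≤ ((q : ℝ) - 1) / ((q : ℝ) + 1) := div_nonneg (by linarith) (by linarith)
  rw [deriv_Phi_eq, ← hy, abs_mul, abs_of_pos (by positivity)]
  calc _ ≤ (q : ℝ) ^ (-(n : ℝ) / 2) * (2 * √q)⁻¹ * (2 / ((q : ℝ) + 1) * (n : ℝ) ^ 2
        + ((q : ℝ) - 1) / ((q : ℝ) + 1) * ((n : ℝ) ^ 2 * (n + 1))) := by
        gcongr
        refine (abs_add_le _ _).trans ?_
        rw [abs_mul, abs_mul, abs_of_nonneg hα, abs_of_nonneg hβ]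
        gcongr
    _ = _ := by field_simp

theorem sq_le_four_mul_of_abs_le {q l : ℝ} (hq : 0 ≤ q) (hl : |l| ≤ 2 * √q) : l ^ 2 ≤ 4 * q := by
  calc l ^ 2 = |l| ^ 2 := (sq_abs l).symm
    _ ≤ (2 * √q) ^ 2 := by gcongr
    _ = 4 * q := by rw [mul_pow, sq_sqrt hq]; norm_num

theorem sq_lt_four_mul_of_abs_lt {q l : ℝ} (hq : 0 ≤ q) (hl : |l| < 2 * √q) : l ^ 2 < 4 * q := by
  calc l ^ 2 = |l| ^ 2 := (sq_abs l).symm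
    _ < (2 * √q) ^ 2 := by gcongr
    _ = 4 * q := by rw [mul_pow, sq_sqrt hq]; norm_num

section Psi

variable {q : ℕ} {l : ℝ}

theorem Psi_eq_zero_of_abs_eq (hl : |l| = 2 * √q) : Psi q l = 0 := by
  have hl2 : l ^ 2 = 4 * q := by
    rw [← sq_abs, hl, mul_pow, sq_sqrt (Nat.cast_nonneg q)]; norm_num
  simp [Psi, hl2]

theorem continuousOn_Psi (hq : 2 ≤ q) : ContinuousOn (Psi q) (Icc (-(2 * √q)) (2 * √q)) := by
  have hqR : (2 : ℝ) ≤ q := mod_cast hq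
  refine ContinuousOn.div (by fun_prop) (by fun_prop) fun l hl => ?_
  have := sq_le_four_mul_of_abs_le (Nat.cast_nonneg q) (abs_le.2 hl)
  nlinarith

theorem abs_Psi_le (hq : 2 ≤ q) (hl : |l| ≤ 2 * √q) :
    |Psi q l| ≤ ((q : ℝ) + 1) * √q / ((q : ℝ) - 1) ^ 2 := by
  have hqR : (2 : ℝ) ≤ q := mod_cast hq
  have hl2 := sq_le_four_mul_of_abs_le (Nat.cast_nonneg q) hl
  have hsqrt : √(4 * q - l ^ 2) ≤ 2 * √q := by
    calc √(4 * q - l ^ 2) ≤ √(4 * q) := sqrt_le_sqrt (by nlinarith)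
      _ = 2 * √q := by rw [sqrt_mul' _ (Nat.cast_nonneg q)]; norm_num
  rw [Psi, abs_of_nonneg (div_nonneg (by positivity) (by nlinarith)),
    show ((q : ℝ) + 1) * √q / ((q : ℝ) - 1) ^ 2 = ((q : ℝ) + 1) * (2 * √q) / (2 * ((q : ℝ) - 1) ^ 2)
      by field_simp]
  gcongr
  · nlinarith
  · nlinarith

end Psi

noncomputable def psiDenominator (q : ℕ) : ℝ[X] := C (2 * ((q : ℝ) + 1) ^ 2) - C 2 * X ^ 2

noncomputable def psiDerivNumerator (q : ℕ) (p : ℝ[X]) : ℝ[X] :=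
  (C (4 * (q : ℝ)) - X ^ 2) * psiDenominator q * derivative^[2] p
    + (C 4 * X * (C (4 * (q : ℝ)) - X ^ 2) - X * psiDenominator q) * derivative p

theorem eval_psiDenominator (q : ℕ) (l : ℝ) :
    (psiDenominator q).eval l = 2 * (((q : ℝ) + 1) ^ 2 - l ^ 2) := by
  simp [psiDenominator]; ring

theorem eval_psiDenominator_pos {q : ℕ} {l : ℝ} (hl : l ^ 2 < 4 * q) :
    0 < (psiDenominator q).eval l := by
  rw [eval_psiDenominator]; nlinarith [sq_nonneg ((q : ℝ) - 1)]

theorem natDegree_psiDerivNumerator_le (q : ℕ) (p : ℝ[X]) :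
    (psiDerivNumerator q p).natDegree ≤ p.natDegree + 2 := by
  have h₂ : ((C (4 * (q : ℝ)) - X ^ 2) * psiDenominator q).natDegree ≤ 4 := by
    unfold psiDenominator; compute_degree
  have h₁ : (C 4 * X * (C (4 * (q : ℝ)) - X ^ 2) - X * psiDenominator q).natDegree ≤ 3 := by
    unfold psiDenominator; compute_degree
  refine (natDegree_add_le _ _).trans (max_le ?_ ?_)
  · exact (natDegree_mul_iterate_derivative_le _ p 2).trans (by omega)
  · exact (natDegree_mul_iterate_derivative_le _ p 1).trans (by omega)

theorem hasDerivAt_Psi_mul_eval_derivative {q : ℕ} (p : ℝ[X]) {l : ℝ} (hl : |l| < 2 * √q) :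
    HasDerivAt (fun l => Psi q l * (derivative p).eval l)
      (((q : ℝ) + 1) / (√(4 * q - l ^ 2) * (psiDenominator q).eval l ^ 2)
        * (psiDerivNumerator q p).eval l) l := by
  have hl2 := sq_lt_four_mul_of_abs_lt (Nat.cast_nonneg q) hl
  have hd := eval_psiDenominator_pos hl2
  have hsqrt : HasDerivAt (fun l : ℝ => √(4 * q - l ^ 2)) (-(2 * l) / (2 * √(4 * q - l ^ 2))) l :=
    ((hasDerivAt_pow 2 l).const_sub _).sqrt (by linarith) |>.congr_deriv (by ring)
  have hden : HasDerivAt (fun l : ℝ => 2 * (((q : ℝ) + 1) ^ 2 - l ^ 2)) (-(4 * l)) l :=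
    (((hasDerivAt_pow 2 l).const_sub _).const_mul 2).congr_deriv (by ring)
  rw [eval_psiDenominator] at hd ⊢
  refine (((hsqrt.const_mul _).fun_div hden hd.ne').fun_mul
    ((derivative p).hasDerivAt l)).congr_deriv ?_
  have hs2 : √(4 * q - l ^ 2) ^ 2 = 4 * q - l ^ 2 := sq_sqrt (by linarith)
  simp only [psiDerivNumerator, eval_psiDenominator, eval_add, eval_mul, eval_sub, eval_C, eval_X,
    eval_pow, Function.iterate_succ, Function.iterate_zero, Function.comp_apply, id]
  field_simp
  rw [mul_comm (q : ℝ) 4, hs2]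
  ring

theorem hasDerivAt_Psi_mul_deriv_Phi {q : ℕ} (n : ℕ) {l : ℝ} (hl : |l| < 2 * √q) :
    HasDerivAt (fun l => Psi q l * deriv (Phi q n) l)
      (((q : ℝ) + 1) / (√(4 * q - l ^ 2) * (psiDenominator q).eval l ^ 2)
        * (psiDerivNumerator q (sphericalPoly q n)).eval l) l := by
  rw [deriv_Phi]
  exact hasDerivAt_Psi_mul_eval_derivative _ hl

theorem exists_root_mem_uIcc_of_deriv_Psi_mul_deriv_Phi_mul_neg {q : ℕ} (n : ℕ) {x y : ℝ}
    (hx : |x| < 2 * √q) (hy : |y| < 2 * √q)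
    (h : deriv (fun l => Psi q l * deriv (Phi q n) l) x
      * deriv (fun l => Psi q l * deriv (Phi q n) l) y < 0) :
    ∃ s ∈ (psiDerivNumerator q (sphericalPoly q n)).roots.toFinset, s ∈ uIcc x y := by
  have hpos {l : ℝ} (hl : |l| < 2 * √q) :
      0 < ((q : ℝ) + 1) / (√(4 * q - l ^ 2) * (psiDenominator q).eval l ^ 2) := by
    have hl2 := sq_lt_four_mul_of_abs_lt (Nat.cast_nonneg q) hl
    have := eval_psiDenominator_pos hl2
    have : 0 < √(4 * q - l ^ 2) := sqrt_pos.2 (by linarith)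
    positivity
  rw [(hasDerivAt_Psi_mul_deriv_Phi n hx).deriv, (hasDerivAt_Psi_mul_deriv_Phi n hy).deriv,
    mul_mul_mul_comm] at h
  exact exists_mem_roots_mem_uIcc_of_eval_mul_neg _
    (neg_of_mul_neg_right h (mul_pos (hpos hx) (hpos hy)).le)

theorem abs_Psi_mul_deriv_Phi_le {q : ℕ} (hq : 2 ≤ q) (n : ℕ) {l : ℝ} (hl : |l| ≤ 2 * √q) :
    |Psi q l * deriv (Phi q n) l| ≤
      (n : ℝ) ^ 2 * (q : ℝ) ^ (-(n : ℝ) / 2) * (2 + ((n : ℝ) + 1) * ((q : ℝ) - 1))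
        / (2 * ((q : ℝ) - 1) ^ 2) := by
  have hqR : (2 : ℝ) ≤ q := mod_cast hq
  rw [abs_mul]
  calc _ ≤ ((q : ℝ) + 1) * √q / ((q : ℝ) - 1) ^ 2 * ((n : ℝ) ^ 2 * (q : ℝ) ^ (-(n : ℝ) / 2)
        * (2 + ((n : ℝ) + 1) * ((q : ℝ) - 1)) / (2 * √q * ((q : ℝ) + 1))) :=
        mul_le_mul (abs_Psi_le hq hl) (abs_deriv_Phi_le (by omega) n hl) (abs_nonneg _)
          (by positivity)
    _ = _ := by
        have : (q : ℝ) - 1 ≠ 0 := by linarith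
        field_simp

theorem continuousOn_Psi_mul_deriv_Phi {q : ℕ} (hq : 2 ≤ q) (n : ℕ) :
    ContinuousOn (fun l => Psi q l * deriv (Phi q n) l) (Icc (-(2 * √q)) (2 * √q)) := by
  rw [deriv_Phi]
  exact (continuousOn_Psi hq).mul (Polynomial.continuous _).continuousOn

theorem card_roots_psiDerivNumerator_sphericalPoly_le (q n : ℕ) :
    (psiDerivNumerator q (sphericalPoly q n)).roots.toFinset.card ≤ n + 2 :=
  (Multiset.toFinset_card_le _).trans <| (card_roots' _).trans <|
    (natDegree_psiDerivNumerator_le q _).trans (add_le_add_left (natDegree_sphericalPoly_le q n) 2)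

theorem PsiPhi_deriv_total_variation_general (q n : ℕ) (hq : 2 ≤ q) :
    (∀ l ∈ Ioo (-(2*Real.sqrt q)) (2*Real.sqrt q),
      DifferentiableAt ℝ (fun l => Psi q l * deriv (Phi q n) l) l) ∧
    (∫ l in (-(2*Real.sqrt q))..(2*Real.sqrt q),
        |deriv (fun l => Psi q l * deriv (Phi q n) l) l|)
      ≤ ((n:ℝ)+2) * (n:ℝ)^2 * (q:ℝ) ^ (-(n:ℝ)/2) * (2 + ((n:ℝ)+1)*((q:ℝ)-1))
          / ((q:ℝ)-1)^2 := by
  have hdiff : ∀ l ∈ Ioo (-(2 * √q)) (2 * √q),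
      DifferentiableAt ℝ (fun l => Psi q l * deriv (Phi q n) l) l :=
    fun l hl => (hasDerivAt_Psi_mul_deriv_Phi n (abs_lt.2 hl)).differentiableAt
  refine ⟨hdiff, ?_⟩
  obtain ⟨-, hTV⟩ := intervalIntegrable_abs_deriv_and_integral_le_of_sign_changes_subset
    _ (by linarith [sqrt_nonneg (q : ℝ)]) (continuousOn_Psi_mul_deriv_Phi hq n) hdiff
    (fun l hl => abs_Psi_mul_deriv_Phi_le hq n (abs_le.2 hl))
    (fun x hx y hy => exists_root_mem_uIcc_of_deriv_Psi_mul_deriv_Phi_mul_neg n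
      (abs_lt.2 hx) (abs_lt.2 hy))
  rw [Psi_eq_zero_of_abs_eq (l := -(2 * √q)) (by simp),
    Psi_eq_zero_of_abs_eq (l := 2 * √q) (by simp)] at hTV
  simp only [zero_mul, abs_zero, zero_add] at hTV
  set M := (n : ℝ) ^ 2 * (q : ℝ) ^ (-(n : ℝ) / 2) * (2 + ((n : ℝ) + 1) * ((q : ℝ) - 1))
    / (2 * ((q : ℝ) - 1) ^ 2)
  have hM : 0 ≤ M :=
    (abs_nonneg _).trans (abs_Psi_mul_deriv_Phi_le hq n (l := 0) (by rw [abs_zero]; positivity))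
  have hcard : ((psiDerivNumerator q (sphericalPoly q n)).roots.toFinset.card : ℝ) ≤ n + 2 :=
    mod_cast card_roots_psiDerivNumerator_sphericalPoly_le q n
  have hq1 : (q : ℝ) - 1 ≠ 0 := by
    have : (2 : ℝ) ≤ q := mod_cast hq
    linarith
  calc _ ≤ 2 * M * _ := hTV
    _ ≤ 2 * M * (n + 2) := by gcongr
    _ = _ := by simp only [M]; field_simp

/-- `λ ↦ Ψ(λ)Φ_n'(λ)` is differentiable on `(−2√q, 2√q)` and its total variation
satisfies `∫_{−2√q}^{2√q} |(ΨΦ_n')'(λ)| dλ ≤ (n+2)n² q^{−n/2}(2+(n+1)(q−1))/(q−1)²`. -/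
theorem PsiPhi_deriv_total_variation (q n : ℕ) (hq : 2 ≤ q) (hn : 1 ≤ n) :
    (∀ l ∈ Ioo (-(2*Real.sqrt q)) (2*Real.sqrt q),
      DifferentiableAt ℝ (fun l => Psi q l * deriv (Phi q n) l) l) ∧
    (∫ l in (-(2*Real.sqrt q))..(2*Real.sqrt q),
        |deriv (fun l => Psi q l * deriv (Phi q n) l) l|)
      ≤ ((n:ℝ)+2) * (n:ℝ)^2 * (q:ℝ) ^ (-(n:ℝ)/2) * (2 + ((n:ℝ)+1)*((q:ℝ)-1))
          / ((q:ℝ)-1)^2 :=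
  PsiPhi_deriv_total_variation_general q n hq
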